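/- Let (Ω, ℳ, P) be a probability space with a filtration (𝓕_s)_{s∈ℝ}, let Π be an n×n real matrix, T > 0, and fix t ≥ T and i ∈ {1,…,n}. Let qᵢ¹,…,qᵢⁿ : [0,∞) → ℝ₊ be continuous functions supported in [0,T] and set Qᵢ(τ) = diag(qᵢ¹(τ),…,qᵢⁿ(τ)). Suppose (s,ω) ↦ η(s,ω) and (s,ω) ↦ x(s,ω) are jointly measurable, that for every s, η(s) is 𝓕_s-measurable and almost surely a canonical basis vector of ℝⁿ and x(s) is 𝓕_s-measurable, integrable, and componentwise nonnegative almost surely with sup_{s∈[t−T,t]} E[‖x(s)‖₁] < ∞, and that for every τ ∈ [0,T], E[η(t) | 𝓕_{t−τ}] = e^{Πᵀτ} η(t−τ) almost surely. Define ζ(s) = E[η(s) ⊗ x(s)] and g_{ij}(τ) = qᵢʲ(τ) ((U_{ji} e^{Πᵀτ}) ⊗ u_jᵀ). Then E[ηᵢ(t) ∫₀^∞ Qᵢ(τ)x(t−τ)dτ] = Σ_{j=1}^{n} ∫₀^∞ g_{ij}(τ) ζ(t−τ) dτ. -/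

import Mathlib

open MeasureTheory Matrix
open scoped Kronecker

noncomputable section

/-- The 1-norm `‖x‖₁ = ∑ i |x i|`. -/
def oneNorm {ι : Type*} [Fintype ι] (x : ι → ℝ) : ℝ := ∑ i, |x i|

/-- A square real matrix is Metzler if its off-diagonal entries are nonnegative. -/
def IsMetzler {ι : Type*} [Fintype ι] (A : Matrix ι ι ℝ) : Prop :=
  ∀ i j, i ≠ j → 0 ≤ A i j

/-- A square real matrix is Hurwitz stable if all of its (complex) eigenvalues have
negative real parts. -/
def IsHurwitz {ι : Type*} [Fintype ι] [DecidableEq ι] (A : Matrix ι ι ℝ) : Prop :=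
  ∀ z ∈ spectrum ℂ (A.map (Complex.ofReal)), z.re < 0

/-- The matrix exponential `e^A`. -/
def matExp {ι : Type*} [Fintype ι] [DecidableEq ι] (A : Matrix ι ι ℝ) : Matrix ι ι ℝ :=
  NormedSpace.exp A

/-- The `i`-th canonical basis vector of `ℝⁿ`. -/
def basisVec {n : ℕ} (i : Fin n) : Fin n → ℝ := fun k => if k = i then 1 else 0

/-- Kronecker product of two vectors: `(u ⊗ v)_{(i,j)} = uᵢ vⱼ`. -/
def vecKron {n : ℕ} (u v : Fin n → ℝ) : Fin n × Fin n → ℝ := fun p => u p.1 * v p.2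

/-- Kronecker product `M ⊗ vᵀ` of an `n×n` matrix with a row vector: an `n × n²` matrix. -/
def matKronRow {n : ℕ} (M : Matrix (Fin n) (Fin n) ℝ) (v : Fin n → ℝ) :
    Matrix (Fin n) (Fin n × Fin n) ℝ := Matrix.of fun k p => M k p.1 * v p.2

/-- Kronecker product `u ⊗ F` of a column vector with an `n × n²` matrix: an `n² × n²` matrix. -/
def vecKronMat {n : ℕ} (u : Fin n → ℝ) (F : Matrix (Fin n) (Fin n × Fin n) ℝ) :
    Matrix (Fin n × Fin n) (Fin n × Fin n) ℝ := Matrix.of fun q p => u q.1 * F q.2 p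

/-- Kronecker product `rᵀ ⊗ Iₙ` of a row vector with the identity: an `n × n²` matrix
with block structure `[r₁ Iₙ … rₙ Iₙ]`. -/
def rowKronId {n : ℕ} (r : Fin n → ℝ) : Matrix (Fin n) (Fin n × Fin n) ℝ :=
  Matrix.of fun k p => r p.1 * (if k = p.2 then 1 else 0)

/-- Block-diagonal matrix `⨁ᵢ Aᵢ`. -/
def blockDiag {n : ℕ} (A : Fin n → Matrix (Fin n) (Fin n) ℝ) :
    Matrix (Fin n × Fin n) (Fin n × Fin n) ℝ :=
  Matrix.of fun q p => if q.1 = p.1 then A q.1 q.2 p.2 else 0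

/-- A piecewise-constant switching signal: constant between consecutive members of an
unbounded increasing sequence of switching times starting at `0`. -/
def PiecewiseConstant {α : Type*} (σ : ℝ → α) : Prop :=
  ∃ u : ℕ → ℝ, StrictMono u ∧ u 0 = 0 ∧ Filter.Tendsto u Filter.atTop Filter.atTop ∧
    ∀ k : ℕ, ∀ t ∈ Set.Ico (u k) (u (k + 1)), σ t = σ (u k)

/-!
Conditioning on `𝓕 (t - τ)`, for which `x (t - τ)` is measurable, the tower property turns
`E[η(t) ⊗ x(t - τ)]` into `(e^{Πᵀτ} ⊗ I) ζ(t - τ)`. Since the `qᵢʲ` are bounded and supported in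
`[0, T]`, and `E ‖x(s)‖₁` is bounded on the window `[t - T, t]`, Fubini moves the expectation
inside the `τ`-integral; the `j`-th summand `g_{ij}(τ) ζ(t - τ)` is then exactly the `j`-th
coordinate of the resulting integrand.
-/

open Set

lemma integral_norm_le_integral_oneNorm {Ω ι : Type*} [Fintype ι] [MeasurableSpace Ω]
    {μ : Measure Ω} {f : Ω → ι → ℝ} (hf : Integrable f μ) :
    ∫ ω, ‖f ω‖ ∂μ ≤ ∫ ω, oneNorm (f ω) ∂μ :=
  integral_mono hf.norm (integrable_finsetSum _ fun k _ => (hf.eval k).abs) fun ω =>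
    (pi_norm_le_iff_of_nonneg (Finset.sum_nonneg fun _ _ => abs_nonneg _)).2 fun k =>
      Finset.single_le_sum (f := fun j => |f ω j|) (fun _ _ => abs_nonneg _) (Finset.mem_univ k)

lemma norm_basisVec_le_one {n : ℕ} (a : Fin n) : ‖basisVec a‖ ≤ 1 :=
  (pi_norm_le_iff_of_nonneg zero_le_one).2 fun k => by unfold basisVec; split_ifs <;> simp

lemma kronecker_one_mulVec_apply {ι κ : Type*} [Fintype ι] [Fintype κ] [DecidableEq κ]
    (A : Matrix ι ι ℝ) (w : ι × κ → ℝ) (i : ι) (k : κ) :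
    ((A ⊗ₖ (1 : Matrix κ κ ℝ)) *ᵥ w) (i, k) = ∑ p, A i p * w (p, k) := by
  simp [mulVec, dotProduct, Fintype.sum_prod_type, one_apply]

lemma smul_matKronRow_single_mulVec {n : ℕ} (c : ℝ) (A : Matrix (Fin n) (Fin n) ℝ) (i j : Fin n)
    (w : Fin n × Fin n → ℝ) :
    (c • matKronRow (single j i 1 * A) (basisVec j)) *ᵥ w =
      Pi.single j (c * ((A ⊗ₖ (1 : Matrix (Fin n) (Fin n) ℝ)) *ᵥ w) (i, j)) := by
  ext k
  rw [kronecker_one_mulVec_apply]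
  by_cases hkj : k = j
  · subst hkj
    simp [mulVec, dotProduct, matKronRow, basisVec, Fintype.sum_prod_type, Matrix.mul_apply,
      single_apply, Finset.mul_sum, mul_assoc]
  · simp [mulVec, dotProduct, matKronRow, basisVec, Matrix.mul_apply, single_apply, hkj,
      Ne.symm hkj]

section Integration

variable {Ω : Type*} {m mΩ : MeasurableSpace Ω} {μ : Measure Ω}

lemma integrable_vecKron {n : ℕ} {ξ X : Ω → Fin n → ℝ} {c : ℝ}
    (hξ : AEStronglyMeasurable ξ μ) (hξc : ∀ᵐ ω ∂μ, ‖ξ ω‖ ≤ c) (hX : Integrable X μ) :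
    Integrable (fun ω => vecKron (ξ ω) (X ω)) μ :=
  Integrable.of_eval fun p => (hX.eval p.2).bdd_mul
    ((continuous_apply p.1).comp_aestronglyMeasurable hξ)
    (hξc.mono fun _ h => (norm_le_pi_norm _ p.1).trans h)

lemma condExp_apply_ae_eq {ι : Type*} [Fintype ι] {Y : Ω → ι → ℝ} (hY : Integrable Y μ) (i : ι) :
    μ[fun ω => Y ω i | m] =ᵐ[μ] fun ω => μ[Y | m] ω i :=
  ((ContinuousLinearMap.proj i).comp_condExp_comm hY).symm

lemma integral_mul_eq_integral_mul_of_condExp_ae_eq (hm : m ≤ mΩ) [SigmaFinite (μ.trim hm)]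
    {f g h : Ω → ℝ} (hf : StronglyMeasurable[m] f) (hg : Integrable g μ)
    (hfg : Integrable (f * g) μ) (hgh : μ[g | m] =ᵐ[μ] h) :
    ∫ ω, f ω * g ω ∂μ = ∫ ω, f ω * h ω ∂μ := calc
  ∫ ω, f ω * g ω ∂μ = ∫ ω, μ[f * g | m] ω ∂μ := (integral_condExp hm).symm
  _ = ∫ ω, f ω * h ω ∂μ := integral_congr_ae <|
    (condExp_mul_of_stronglyMeasurable_left hf hfg hg).trans (hgh.mono fun _ hω => by simp [hω])

theorem integral_vecKron_eq_kronecker_one_mulVec (hm : m ≤ mΩ) [SigmaFinite (μ.trim hm)]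
    {n : ℕ} (A : Matrix (Fin n) (Fin n) ℝ) {Y ξ X : Ω → Fin n → ℝ} (hX : StronglyMeasurable[m] X)
    (hY : Integrable Y μ) (hYX : Integrable (fun ω => vecKron (Y ω) (X ω)) μ)
    (hξX : Integrable (fun ω => vecKron (ξ ω) (X ω)) μ)
    (hcond : μ[Y | m] =ᵐ[μ] fun ω => A *ᵥ ξ ω) :
    ∫ ω, vecKron (Y ω) (X ω) ∂μ = (A ⊗ₖ (1 : Matrix (Fin n) (Fin n) ℝ)) *ᵥ
      ∫ ω, vecKron (ξ ω) (X ω) ∂μ := by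
  ext ⟨i, k⟩
  rw [kronecker_one_mulVec_apply, eval_integral hYX.eval]
  simp_rw [eval_integral hξX.eval, vecKron]
  have hXk : StronglyMeasurable[m] fun ω => X ω k :=
    (continuous_apply k).comp_stronglyMeasurable hX
  calc ∫ ω, Y ω i * X ω k ∂μ = ∫ ω, X ω k * Y ω i ∂μ := by simp_rw [mul_comm]
    _ = ∫ ω, X ω k * (A *ᵥ ξ ω) i ∂μ :=
      integral_mul_eq_integral_mul_of_condExp_ae_eq hm hXk (hY.eval i)
        ((hYX.eval (i, k)).congr (ae_of_all _ fun _ => mul_comm _ _))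
        ((condExp_apply_ae_eq hY i).trans (hcond.mono fun _ hω => by simp [hω]))
    _ = ∫ ω, ∑ p, A i p * (ξ ω p * X ω k) ∂μ := by
      simp only [mulVec, dotProduct, Finset.mul_sum]
      exact integral_congr_ae (ae_of_all _ fun ω => Finset.sum_congr rfl fun p _ => by ring)
    _ = ∑ p, A i p * ∫ ω, ξ ω p * X ω k ∂μ := by
      rw [integral_finsetSum (f := fun p ω => A i p * (ξ ω p * X ω k)) _
        fun p _ => (hξX.eval (p, k)).const_mul (A i p)]
      simp_rw [integral_const_mul]

lemma integral_smul_mul_eq_mul_integral_vecKron {n : ℕ} {Y X : Ω → Fin n → ℝ}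
    (hYX : Integrable (fun ω => vecKron (Y ω) (X ω)) μ) (i : Fin n) (c : Fin n → ℝ) :
    ∫ ω, Y ω i • (c * X ω) ∂μ = c * fun k => (∫ ω, vecKron (Y ω) (X ω) ∂μ) (i, k) := by
  have hcYX : ∀ k, Integrable (fun ω => c k * (Y ω i * X ω k)) μ :=
    fun k => (hYX.eval (i, k)).const_mul (c k)
  ext k
  rw [eval_integral (f := fun ω => Y ω i • (c * X ω))
      fun k => (hcYX k).congr (ae_of_all _ fun _ => mul_left_comm _ _ _),
    Pi.mul_apply, eval_integral hYX.eval, ← integral_const_mul]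
  exact integral_congr_ae (ae_of_all _ fun _ => mul_left_comm _ _ _)

lemma integrable_prod_of_integral_norm_le {α E : Type*} [MeasurableSpace α]
    [NormedAddCommGroup E] {ν : Measure α} [IsFiniteMeasure ν] [SFinite μ] {f : α × Ω → E}
    (hf : AEStronglyMeasurable f (ν.prod μ)) (hsec : ∀ᵐ a ∂ν, Integrable (fun ω => f (a, ω)) μ)
    {K : ℝ} (hK : ∀ᵐ a ∂ν, ∫ ω, ‖f (a, ω)‖ ∂μ ≤ K) : Integrable f (ν.prod μ) :=
  (integrable_prod_iff hf).2 ⟨hsec, Integrable.of_bound hf.norm.integral_prod_right' K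
    (hK.mono fun _ h => by rwa [Real.norm_of_nonneg (integral_nonneg fun _ => norm_nonneg _)])⟩

lemma integrable_prod_comp_sub {ι : Type*} [Fintype ι] [SFinite μ] {x : ℝ → Ω → ι → ℝ}
    (hx : Measurable fun z : ℝ × Ω => x z.1 z.2) (hxint : ∀ s, Integrable (x s) μ) {t T K : ℝ}
    (hK : ∀ s ∈ Icc (t - T) t, ∫ ω, ‖x s ω‖ ∂μ ≤ K) :
    Integrable (fun z : ℝ × Ω => x (t - z.1) z.2) ((volume.restrict (Icc 0 T)).prod μ) :=
  integrable_prod_of_integral_norm_le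
    (hx.comp ((measurable_const.sub measurable_fst).prodMk measurable_snd)).aestronglyMeasurable
    (ae_of_all _ fun τ => hxint (t - τ))
    ((ae_restrict_mem measurableSet_Icc).mono fun τ hτ =>
      hK (t - τ) ⟨by linarith [hτ.2], by linarith [hτ.1]⟩)

lemma integrable_prod_smul_mul {α ι : Type*} [MeasurableSpace α] [Fintype ι] {ν : Measure α}
    [SFinite ν] [SFinite μ] {Z : Ω → ℝ} {Q : α → ι → ℝ} {X : α × Ω → ι → ℝ} {c C : ℝ}
    (hX : Integrable X (ν.prod μ)) (hZ : AEStronglyMeasurable Z μ) (hZc : ∀ᵐ ω ∂μ, ‖Z ω‖ ≤ c)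
    (hQ : Measurable Q) (hQC : ∀ a, ‖Q a‖ ≤ C) :
    Integrable (fun z => Z z.2 • (Q z.1 * X z)) (ν.prod μ) :=
  (hX.bdd_mul (hQ.comp measurable_fst).aestronglyMeasurable (ae_of_all _ fun z => hQC z.1)).bdd_smul
    c hZ.comp_snd (Measure.quasiMeasurePreserving_snd.ae hZc)

lemma integral_eq_sum_integral_of_ae_eq_pi_single {α ι : Type*} [MeasurableSpace α] [Fintype ι]
    [DecidableEq ι] {ν : Measure α} {S : α → ι → ℝ} {G : ι → α → ι → ℝ} (hS : Integrable S ν)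
    (hG : ∀ᵐ a ∂ν, ∀ j, G j a = Pi.single j (S a j)) :
    ∫ a, S a ∂ν = ∑ j, ∫ a, G j a ∂ν := by
  have hGint j : Integrable (G j) ν :=
    ((ContinuousLinearMap.single ℝ (fun _ : ι => ℝ) j).integrable_comp (hS.eval j)).congr
      (hG.mono fun _ h => (h j).symm)
  rw [← integral_finsetSum _ fun j _ => hGint j]
  exact integral_congr_ae (hG.mono fun a h => by simp_rw [h]; exact (Finset.univ_sum_single _).symm)

end Integration

theorem stmt7_general (n : ℕ) {Ω : Type*} [mΩ : MeasurableSpace Ω]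
    (μ : Measure Ω) [IsProbabilityMeasure μ]
    (𝓕 : Filtration ℝ mΩ)
    (Pi : Matrix (Fin n) (Fin n) ℝ)
    (T : ℝ) (t : ℝ) (i : Fin n)
    (q : Fin n → ℝ → ℝ) (hqc : ∀ j, Continuous (q j))
    (hqsupp : ∀ j, ∀ τ : ℝ, τ ∉ Set.Icc (0 : ℝ) T → q j τ = 0)
    (η : ℝ → Ω → Fin n → ℝ) (x : ℝ → Ω → Fin n → ℝ)
    (hxjm : Measurable fun sω : ℝ × Ω => x sω.1 sω.2)
    (hηmeas : ∀ s : ℝ, Measurable[𝓕 s] (η s))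
    (hηbasis : ∀ s : ℝ, ∀ᵐ ω ∂μ, ∃ a : Fin n, η s ω = basisVec a)
    (hxmeas : ∀ s : ℝ, Measurable[𝓕 s] (x s))
    (hxint : ∀ s : ℝ, Integrable (x s) μ)
    (hxbdd : ∃ K : ℝ, ∀ s ∈ Set.Icc (t - T) t, (∫ ω, oneNorm (x s ω) ∂μ) ≤ K)
    (hcond : ∀ τ ∈ Set.Icc (0 : ℝ) T,
      μ[η t | 𝓕 (t - τ)] =ᵐ[μ]
        fun ω => (matExp (τ • Pi.transpose)).mulVec (η (t - τ) ω)) :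
    (∫ ω, η t ω i • (∫ τ in Set.Ici (0 : ℝ), (fun k => q k τ * x (t - τ) ω k)) ∂μ) =
      ∑ j : Fin n,
        ∫ τ in Set.Ici (0 : ℝ),
          (q j τ • matKronRow (Matrix.single j i (1 : ℝ) * matExp (τ • Pi.transpose))
              (basisVec j)).mulVec
            (∫ ω, vecKron (η (t - τ) ω) (x (t - τ) ω) ∂μ) := by
  set ν := volume.restrict (Icc (0 : ℝ) T)
  set Q : ℝ → Fin n → ℝ := fun τ k => q k τ
  set F : ℝ → Ω → Fin n → ℝ := fun τ ω => η t ω i • (Q τ * x (t - τ) ω)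
  set ζ : ℝ → Fin n × Fin n → ℝ := fun τ => ∫ ω, vecKron (η (t - τ) ω) (x (t - τ) ω) ∂μ
  have hηm s : Measurable (η s) := (hηmeas s).mono (𝓕.le s) le_rfl
  have hη s : ∀ᵐ ω ∂μ, ‖η s ω‖ ≤ 1 :=
    (hηbasis s).mono fun _ ⟨a, ha⟩ => ha ▸ norm_basisVec_le_one a
  have hηx s s' : Integrable (fun ω => vecKron (η s ω) (x s' ω)) μ :=
    integrable_vecKron (hηm s).aestronglyMeasurable (hη s) (hxint s')
  have hQ τ (hτ : τ ∉ Icc (0 : ℝ) T) : Q τ = 0 := funext fun k => hqsupp k τ hτ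
  obtain ⟨C, hC⟩ := (continuous_pi hqc).bounded_above_of_compact_support
    (HasCompactSupport.intro isCompact_Icc hQ)
  obtain ⟨K, hK⟩ := hxbdd
  have hF : Integrable (Function.uncurry F) (ν.prod μ) :=
    integrable_prod_smul_mul (integrable_prod_comp_sub hxjm hxint fun s hs =>
        (integral_norm_le_integral_oneNorm (hxint s)).trans (hK s hs))
      ((measurable_pi_apply i).comp (hηm t)).aestronglyMeasurable
      ((hη t).mono fun _ h => (norm_le_pi_norm _ i).trans h) (continuous_pi hqc).measurable hC
  have hFτ : ∀ τ ∈ Icc (0 : ℝ) T,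
      ∫ ω, F τ ω ∂μ = Q τ * fun k => ((matExp (τ • Piᵀ) ⊗ₖ 1) *ᵥ ζ τ) (i, k) := fun τ hτ => by
    rw [integral_smul_mul_eq_mul_integral_vecKron (hηx _ _),
      integral_vecKron_eq_kronecker_one_mulVec (𝓕.le (t - τ)) _
        (hxmeas (t - τ)).stronglyMeasurable (.of_bound (hηm t).aestronglyMeasurable 1 (hη t))
        (hηx _ _) (hηx _ _) (hcond τ hτ)]
  calc ∫ ω, η t ω i • (∫ τ in Ici 0, Q τ * x (t - τ) ω) ∂μ = ∫ ω, ∫ τ, F τ ω ∂ν ∂μ := by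
        congr 1 with ω
        rw [setIntegral_eq_of_subset_of_forall_sdiff_eq_zero measurableSet_Ici
          Icc_subset_Ici_self fun τ hτ => by simp [hQ τ hτ.2], ← integral_smul]
    _ = ∫ τ, ∫ ω, F τ ω ∂μ ∂ν := (integral_integral_swap hF).symm
    _ = ∑ j, ∫ τ, (q j τ • matKronRow (single j i 1 * matExp (τ • Piᵀ)) (basisVec j)) *ᵥ ζ τ ∂ν :=
        integral_eq_sum_integral_of_ae_eq_pi_single hF.integral_prod_left <|
          (ae_restrict_mem measurableSet_Icc).mono fun τ hτ j => by
            rw [smul_matKronRow_single_mulVec, hFτ τ hτ]; rfl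
    _ = _ := Finset.sum_congr rfl fun j _ =>
        (setIntegral_eq_of_subset_of_forall_sdiff_eq_zero measurableSet_Ici Icc_subset_Ici_self
          fun τ hτ => by simp [hqsupp j τ hτ.2]).symm

/-- `E[ηᵢ(t) ∫₀^∞ Qᵢ(τ) x(t−τ) dτ] = ∑ⱼ ∫₀^∞ g_{ij}(τ) ζ(t−τ) dτ`, where
`g_{ij}(τ) = qᵢʲ(τ) ((U_{ji} e^{Πᵀτ}) ⊗ uⱼᵀ)` and `ζ(s) = E[η(s) ⊗ x(s)]`. -/
theorem stmt7 (n : ℕ) {Ω : Type*} [mΩ : MeasurableSpace Ω]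
    (μ : Measure Ω) [IsProbabilityMeasure μ]
    (𝓕 : Filtration ℝ mΩ)
    (Pi : Matrix (Fin n) (Fin n) ℝ)
    (T : ℝ) (hT : 0 < T) (t : ℝ) (ht : T ≤ t) (i : Fin n)
    (q : Fin n → ℝ → ℝ) (hqc : ∀ j, Continuous (q j)) (hqnn : ∀ j τ, 0 ≤ q j τ)
    (hqsupp : ∀ j, ∀ τ : ℝ, τ ∉ Set.Icc (0 : ℝ) T → q j τ = 0)
    (η : ℝ → Ω → Fin n → ℝ) (x : ℝ → Ω → Fin n → ℝ)
    (hηjm : Measurable fun sω : ℝ × Ω => η sω.1 sω.2)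
    (hxjm : Measurable fun sω : ℝ × Ω => x sω.1 sω.2)
    (hηmeas : ∀ s : ℝ, Measurable[𝓕 s] (η s))
    (hηbasis : ∀ s : ℝ, ∀ᵐ ω ∂μ, ∃ a : Fin n, η s ω = basisVec a)
    (hxmeas : ∀ s : ℝ, Measurable[𝓕 s] (x s))
    (hxint : ∀ s : ℝ, Integrable (x s) μ)
    (hxnn : ∀ s : ℝ, ∀ᵐ ω ∂μ, ∀ k, 0 ≤ x s ω k)
    (hxbdd : ∃ K : ℝ, ∀ s ∈ Set.Icc (t - T) t, (∫ ω, oneNorm (x s ω) ∂μ) ≤ K)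
    (hcond : ∀ τ ∈ Set.Icc (0 : ℝ) T,
      μ[η t | 𝓕 (t - τ)] =ᵐ[μ]
        fun ω => (matExp (τ • Pi.transpose)).mulVec (η (t - τ) ω)) :
    (∫ ω, η t ω i • (∫ τ in Set.Ici (0 : ℝ), (fun k => q k τ * x (t - τ) ω k)) ∂μ) =
      ∑ j : Fin n,
        ∫ τ in Set.Ici (0 : ℝ),
          (q j τ • matKronRow (Matrix.single j i (1 : ℝ) * matExp (τ • Pi.transpose))
              (basisVec j)).mulVec
            (∫ ω, vecKron (η (t - τ) ω) (x (t - τ) ω) ∂μ) :=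
  stmt7_general n (mΩ := mΩ) μ 𝓕 Pi T t i q hqc hqsupp η x hxjm hηmeas hηbasis hxmeas hxint hxbdd
    hcond
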